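/- arXiv:1703.07170 — 2 statements merged into one kernel-verified Lean document; each statement's English description precedes it below -/
import Mathlib

section
/- Let x be a chain-point for the chain V_0 ⊊ V_1 ⊊ … ⊊ V_k and let U ⊆ V satisfy x(E(U)) = |U| − 1. Then the set I(U) := {i ∈ {0,1,…,k+1} : L_i ∩ U ≠ ∅} is an interval of integers, i.e., if i < j < m and i, m ∈ I(U) then j ∈ I(U). -/
open Finset
open scoped Classical

variable {V : Type*} [Fintype V]

/-- The set of edges of `G` with one endpoint in `S₁` and the other in `S₂`. -/
noncomputable def cutBetween (G : SimpleGraph V) (S₁ S₂ : Finset V) : Finset (Sym2 V) :=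
  G.edgeFinset.filter (fun e => ∃ u v, e = s(u, v) ∧ u ∈ S₁ ∧ v ∈ S₂)

/-- The cut `δ(S)`: edges of `G` with exactly one endpoint in `S`. -/
noncomputable def cut (G : SimpleGraph V) (S : Finset V) : Finset (Sym2 V) :=
  cutBetween G S Sᶜ

/-- `E(S)`: edges of `G` with both endpoints in `S`. -/
noncomputable def inducedEdges (G : SimpleGraph V) (S : Finset V) : Finset (Sym2 V) :=
  G.edgeFinset.filter (fun e => ∀ v ∈ e, v ∈ S)

/-- `T` is the edge set of a spanning tree of `G`. -/
def IsSpanningTree (G : SimpleGraph V) (T : Finset (Sym2 V)) : Prop :=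
  (T : Set (Sym2 V)) ⊆ G.edgeSet ∧ (SimpleGraph.fromEdgeSet (T : Set (Sym2 V))).IsTree

/-- Characteristic vector of a set of edges. -/
noncomputable def chi (T : Finset (Sym2 V)) : Sym2 V → ℝ :=
  fun e => if e ∈ T then 1 else 0

/-- The spanning tree polytope `Sp(G)`. -/
noncomputable def spanningTreePolytope (G : SimpleGraph V) : Set (Sym2 V → ℝ) :=
  convexHull ℝ {x | ∃ T : Finset (Sym2 V), IsSpanningTree G T ∧ x = chi T}

/-- The level sets `L_i = V_i \ V_{i-1}` of a chain `V_0 ⊊ … ⊊ V_k` (with `V_{-1} = ∅`,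
`V_{k+1} = V`). -/
noncomputable def level (Vc : ℕ → Finset V) (k : ℕ) : ℕ → Finset V :=
  fun i => if i = 0 then Vc 0 else if i ≤ k then Vc i \ Vc (i - 1) else Finset.univ \ Vc k

/-- `x` is a chain-point for the chain `V_0 ⊊ … ⊊ V_k`. -/
def IsChainPoint (G : SimpleGraph V) (Vc : ℕ → Finset V) (k : ℕ) (x : Sym2 V → ℝ) : Prop :=
  x ∈ spanningTreePolytope G ∧
  (∑ e ∈ cut G (Vc 0), x e) = 1 ∧
  (∑ e ∈ cut G (Vc k), x e) = 1 ∧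
  (∀ i, 1 ≤ i → i ≤ k - 1 → (∑ e ∈ cut G (Vc i), x e) < 2) ∧
  (∀ i, 1 ≤ i → i ≤ k →
    (∑ v ∈ level Vc k i, ∑ e ∈ cut G {v}, x e) = 2 * ((level Vc k i).card : ℝ))

/-- A Gao-tree for the chain `V_0 ⊊ … ⊊ V_k`: a spanning tree meeting each cut `δ(V_i)`
in exactly one edge. -/
def IsGaoTree (G : SimpleGraph V) (Vc : ℕ → Finset V) (k : ℕ) (T : Finset (Sym2 V)) : Prop :=
  IsSpanningTree G T ∧ ∀ i ≤ k, (T ∩ cut G (Vc i)).card = 1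

/-- A Gao-tree for the subchain of `V_0 ⊊ … ⊊ V_k` given by the index set `I`. -/
def IsGaoTreeOn (G : SimpleGraph V) (Vc : ℕ → Finset V) (I : Finset ℕ)
    (T : Finset (Sym2 V)) : Prop :=
  IsSpanningTree G T ∧ ∀ i ∈ I, (T ∩ cut G (Vc i)).card = 1

/-- `Sp_𝒞(G)`: the convex hull of characteristic vectors of Gao-trees. -/
noncomputable def gaoPolytope (G : SimpleGraph V) (Vc : ℕ → Finset V) (k : ℕ) :
    Set (Sym2 V → ℝ) :=
  convexHull ℝ {x | ∃ T : Finset (Sym2 V), IsGaoTree G Vc k T ∧ x = chi T}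

/-- `F` is the edge set of a spanning tree of the induced subgraph `G(U)`. -/
def IsSpanningTreeOfInduced (G : SimpleGraph V) (U : Finset V) (F : Finset (Sym2 V)) : Prop :=
  (F : Set (Sym2 V)) ⊆ G.edgeSet ∧ (∀ e ∈ F, ∀ v ∈ e, v ∈ U) ∧
  F.card = U.card - 1 ∧
  ∀ u ∈ U, ∀ v ∈ U, (SimpleGraph.fromEdgeSet (F : Set (Sym2 V))).Reachable u v

/-- The rank of `X` in the cycle matroid of `G`. -/
noncomputable def cycleRank (G : SimpleGraph V) (X : Finset (Sym2 V)) : ℕ :=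
  (G.edgeFinset.powerset.filter (fun T => IsSpanningTree G T)).sup (fun T => (T ∩ X).card)

/-- The rank of `X` in the matroid whose bases are the Gao-trees. -/
noncomputable def gaoRank (G : SimpleGraph V) (Vc : ℕ → Finset V) (k : ℕ)
    (X : Finset (Sym2 V)) : ℕ :=
  (G.edgeFinset.powerset.filter (fun T => IsGaoTree G Vc k T)).sup (fun T => (T ∩ X).card)

/-- `x` is a solution of the `s`–`t` path TSP subtour elimination LP. -/
def IsSubtourLPSolution (G : SimpleGraph V) (s t : V) (x : Sym2 V → ℝ) : Prop :=
  x ∈ spanningTreePolytope G ∧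
  (∀ v, v ≠ s → v ≠ t → (∑ e ∈ cut G {v}, x e) = 2) ∧
  (∑ e ∈ cut G {s}, x e) = 1 ∧ (∑ e ∈ cut G {t}, x e) = 1

/-- Rank function of a matroid on a finite ground set, as a function on finsets. -/
noncomputable def mrank {E : Type*} [Fintype E] (M : Matroid E) (X : Finset E) : ℕ :=
  (X.powerset.filter (fun I : Finset E => M.Indep (I : Set E))).sup Finset.card

/-- Convex hull of characteristic vectors of independent sets of a matroid. -/
noncomputable def indepPolytope {E : Type*} [Fintype E] (M : Matroid E) : Set (E → ℝ) :=
  convexHull ℝ {x | ∃ I : Finset E, M.Indep (I : Set E) ∧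
    x = fun e => if e ∈ I then (1 : ℝ) else 0}

section Helpers

variable {G : SimpleGraph V}

lemma exists_rep {e : Sym2 V} (he : e ∈ G.edgeFinset) :
    ∃ a b, a ≠ b ∧ e = s(a, b) := by
  induction e using Sym2.ind with
  | _ a b => exact ⟨a, b, (G.mem_edgeSet.mp (SimpleGraph.mem_edgeFinset.mp he)).ne, rfl⟩

lemma mem_cut_iff {S : Finset V} {e : Sym2 V} :
    e ∈ cut G S ↔ e ∈ G.edgeFinset ∧ ∃ u v, e = s(u, v) ∧ u ∈ S ∧ v ∉ S := by
  simp [cut, cutBetween, mem_filter]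

lemma cut_subset {S : Finset V} : cut G S ⊆ G.edgeFinset :=
  fun _ he => (mem_cut_iff.mp he).1

lemma induced_subset {S : Finset V} : inducedEdges G S ⊆ G.edgeFinset :=
  Finset.filter_subset _ _

lemma mem_cut_iff' {S : Finset V} {a b : V} (hab : a ≠ b)
    (he : s(a, b) ∈ G.edgeFinset) :
    s(a, b) ∈ cut G S ↔ ((a ∈ S ∧ b ∉ S) ∨ (b ∈ S ∧ a ∉ S)) := by
  rw [mem_cut_iff]
  constructor
  · rintro ⟨-, u, v, huv, hu, hv⟩
    rw [Sym2.eq_iff] at huv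
    rcases huv with ⟨rfl, rfl⟩ | ⟨rfl, rfl⟩
    · exact Or.inl ⟨hu, hv⟩
    · exact Or.inr ⟨hu, hv⟩
  · rintro (⟨ha, hb⟩ | ⟨hb, ha⟩)
    · exact ⟨he, a, b, rfl, ha, hb⟩
    · exact ⟨he, b, a, Sym2.eq_swap.symm, hb, ha⟩

lemma mem_cut_elim {S : Finset V} {e : Sym2 V} (he : e ∈ cut G S) :
    ∃ a b, a ≠ b ∧ e = s(a, b) ∧ a ∈ S ∧ b ∉ S := by
  obtain ⟨hee, u, v, rfl, hu, hv⟩ := mem_cut_iff.mp he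
  exact ⟨u, v, (G.mem_edgeSet.mp (SimpleGraph.mem_edgeFinset.mp hee)).ne, rfl, hu, hv⟩

lemma not_mem_cut_out {S : Finset V} {e : Sym2 V} (h : ∀ v ∈ e, v ∉ S) : e ∉ cut G S := by
  intro he
  obtain ⟨a, b, hab, rfl, ha, hb⟩ := mem_cut_elim he
  exact h a (Sym2.mem_mk_left a b) ha

lemma mem_induced_iff' {S : Finset V} {a b : V}
    (he : s(a, b) ∈ G.edgeFinset) :
    s(a, b) ∈ inducedEdges G S ↔ a ∈ S ∧ b ∈ S := by
  simp only [inducedEdges, mem_filter, he, true_and]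
  constructor
  · intro h; exact ⟨h a (Sym2.mem_mk_left a b), h b (Sym2.mem_mk_right a b)⟩
  · rintro ⟨ha, hb⟩ v hv
    rcases Sym2.mem_iff.mp hv with rfl | rfl
    · exact ha
    · exact hb

lemma inducedEdges_mono {S S' : Finset V} (h : S ⊆ S') :
    inducedEdges G S ⊆ inducedEdges G S' := by
  intro e he
  rw [inducedEdges, mem_filter] at he ⊢
  exact ⟨he.1, fun v hv => h (he.2 v hv)⟩

lemma card_inter_pair {L : Finset V} {a b : V} (hab : a ≠ b) :
    (L.filter (· ∈ s(a, b))).card =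
      (if a ∈ L then 1 else 0) + (if b ∈ L then 1 else 0) := by
  have h : L.filter (· ∈ s(a, b)) = L ∩ {a, b} := by
    ext v
    simp [Sym2.mem_iff, mem_inter, mem_filter]
  rw [h]
  by_cases ha : a ∈ L <;> by_cases hb : b ∈ L
  · have : L ∩ {a, b} = {a, b} := by ext v; simp [mem_inter]; rintro (rfl | rfl) <;> assumption
    simp [this, hab, ha, hb]
  · have : L ∩ {a, b} = {a} := by
      ext v; simp [mem_inter]
      constructor
      · rintro ⟨hv, rfl | rfl⟩ <;> [rfl; exact absurd hv hb]
      · rintro rfl; exact ⟨ha, Or.inl rfl⟩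
    simp [this, ha, hb]
  · have : L ∩ {a, b} = {b} := by
      ext v; simp [mem_inter]
      constructor
      · rintro ⟨hv, rfl | rfl⟩ <;> [exact absurd hv ha; rfl]
      · rintro rfl; exact ⟨hb, Or.inr rfl⟩
    simp [this, ha, hb]
  · have : L ∩ {a, b} = ∅ := by
      ext v; simp only [mem_inter, mem_insert, mem_singleton, notMem_empty, iff_false, not_and]
      rintro hv (rfl | rfl) <;> [exact ha hv; exact hb hv]
    simp [this, ha, hb]

lemma cut_singleton (G : SimpleGraph V) (v : V) :
    cut G {v} = G.edgeFinset.filter (fun e => v ∈ e) := by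
  ext e
  rw [mem_cut_iff, mem_filter]
  constructor
  · rintro ⟨he, u, w, rfl, hu, hw⟩
    rw [mem_singleton] at hu
    subst hu
    exact ⟨he, Sym2.mem_mk_left _ _⟩
  · rintro ⟨he, hv⟩
    obtain ⟨a, b, hab, rfl⟩ := exists_rep he
    refine ⟨he, ?_⟩
    rcases Sym2.mem_iff.mp hv with rfl | rfl
    · exact ⟨v, b, rfl, mem_singleton_self v, by simpa [mem_singleton] using hab.symm⟩
    · exact ⟨v, a, Sym2.eq_swap.symm, mem_singleton_self v, by simpa [mem_singleton] using hab⟩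

lemma degree_sum_eq (G : SimpleGraph V) (x : Sym2 V → ℝ) (L : Finset V) :
    ∑ v ∈ L, ∑ e ∈ cut G {v}, x e
      = ∑ e ∈ cut G L, x e + 2 * ∑ e ∈ inducedEdges G L, x e := by
  classical
  set n : Sym2 V → ℕ := fun e => (L.filter (· ∈ e)).card with hn
  have hcut : cut G L = G.edgeFinset.filter (fun e => n e = 1) := by
    ext e
    rw [mem_filter]
    constructor
    · intro he
      have hee := cut_subset he
      obtain ⟨a, b, hab, rfl⟩ := exists_rep hee
      refine ⟨hee, ?_⟩
      rcases (mem_cut_iff' hab hee).mp he with ⟨ha, hb⟩ | ⟨hb, ha⟩ <;>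
        simp [hn, card_inter_pair hab, ha, hb]
    · rintro ⟨hee, hne⟩
      obtain ⟨a, b, hab, rfl⟩ := exists_rep hee
      rw [mem_cut_iff' hab hee]
      rw [hn] at hne
      simp only [card_inter_pair hab] at hne
      by_cases ha : a ∈ L <;> by_cases hb : b ∈ L <;> simp [ha, hb] at hne ⊢
  have hind : inducedEdges G L = G.edgeFinset.filter (fun e => n e = 2) := by
    ext e
    rw [mem_filter]
    constructor
    · intro he
      have hee := induced_subset he
      obtain ⟨a, b, hab, rfl⟩ := exists_rep hee
      obtain ⟨ha, hb⟩ := (mem_induced_iff' hee).mp he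
      exact ⟨hee, by simp [hn, card_inter_pair hab, ha, hb]⟩
    · rintro ⟨hee, hne⟩
      obtain ⟨a, b, hab, rfl⟩ := exists_rep hee
      rw [mem_induced_iff' hee]
      rw [hn] at hne
      simp only [card_inter_pair hab] at hne
      by_cases ha : a ∈ L <;> by_cases hb : b ∈ L <;> simp [ha, hb] at hne ⊢
  have hle2 : ∀ e ∈ G.edgeFinset, n e ≤ 2 := by
    intro e he
    obtain ⟨a, b, hab, rfl⟩ := exists_rep he
    rw [hn]; simp only [card_inter_pair hab]
    split <;> split <;> omega
  have lhs : ∑ v ∈ L, ∑ e ∈ cut G {v}, x e = ∑ e ∈ G.edgeFinset, (n e : ℝ) * x e := by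
    have h1 : ∀ v, ∑ e ∈ cut G {v}, x e = ∑ e ∈ G.edgeFinset, if v ∈ e then x e else 0 := by
      intro v; rw [cut_singleton, Finset.sum_filter]
    simp_rw [h1]
    rw [Finset.sum_comm]
    refine Finset.sum_congr rfl fun e _ => ?_
    rw [← Finset.sum_filter, Finset.sum_const, nsmul_eq_mul]
  have split1 := Finset.sum_filter_add_sum_filter_not G.edgeFinset
    (fun e => n e = 1) (fun e => (n e : ℝ) * x e)
  have split2 := Finset.sum_filter_add_sum_filter_not
    (G.edgeFinset.filter (fun e => ¬ n e = 1)) (fun e => n e = 2) (fun e => (n e : ℝ) * x e)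
  have hff : (G.edgeFinset.filter (fun e => ¬ n e = 1)).filter (fun e => n e = 2)
      = G.edgeFinset.filter (fun e => n e = 2) := by
    ext e
    simp only [mem_filter, and_assoc]
    constructor
    · rintro ⟨h1, _, h3⟩; exact ⟨h1, h3⟩
    · rintro ⟨h1, h3⟩; exact ⟨h1, by omega, h3⟩
  rw [hff] at split2
  have hzero : ∑ e ∈ (G.edgeFinset.filter (fun e => ¬ n e = 1)).filter (fun e => ¬ n e = 2),
      (n e : ℝ) * x e = 0 := by
    refine Finset.sum_eq_zero fun e he => ?_
    simp only [mem_filter] at he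
    have := hle2 e he.1.1
    have h0 : n e = 0 := by omega
    rw [h0]; simp
  have p1 : ∑ e ∈ G.edgeFinset.filter (fun e => n e = 1), (n e : ℝ) * x e
      = ∑ e ∈ cut G L, x e := by
    rw [hcut]
    refine Finset.sum_congr rfl fun e he => ?_
    rw [(Finset.mem_filter.mp he).2]
    simp
  have p2 : ∑ e ∈ G.edgeFinset.filter (fun e => n e = 2), (n e : ℝ) * x e
      = 2 * ∑ e ∈ inducedEdges G L, x e := by
    rw [hind, Finset.mul_sum]
    refine Finset.sum_congr rfl fun e he => ?_
    rw [(Finset.mem_filter.mp he).2]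
    simp
  rw [lhs]
  linarith

lemma tree_count (G : SimpleGraph V) {T : Finset (Sym2 V)}
    (hT : IsSpanningTree G T) {S : Finset V} (hS : S.Nonempty) :
    (T ∩ inducedEdges G S).card + 1 ≤ S.card := by
  classical
  obtain ⟨hTsub, htree⟩ := hT
  set G' := SimpleGraph.fromEdgeSet (T : Set (Sym2 V)) with hG'
  have hedge : G'.edgeSet = (T : Set (Sym2 V)) := by
    rw [hG', SimpleGraph.edgeSet_fromEdgeSet]
    ext e
    simp only [Set.mem_diff, Set.mem_setOf_eq, and_iff_left_iff_imp]
    intro he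
    exact SimpleGraph.not_isDiag_of_mem_edgeSet G (hTsub he)
  have hEF : G'.edgeFinset = T := by
    ext e
    simp [SimpleGraph.mem_edgeFinset, hedge]
  have hcard : T.card + 1 = Fintype.card V := by
    rw [← hEF]; exact htree.card_edgeFinset
  obtain ⟨r, hr⟩ := hS
  have hup := htree.existsUnique_path
  set P : ∀ w, G'.Walk w r := fun w => (hup w r).choose with hPdef
  have hPpath : ∀ w, (P w).IsPath := fun w => (hup w r).choose_spec.1
  have hPuniq : ∀ w (q : G'.Walk w r), q.IsPath → q = P w :=
    fun w q hq => (hup w r).choose_spec.2 q hq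
  set f : V → Sym2 V := fun w => s(w, (P w).getVert 1) with hfdef
  have hdec : ∀ w, w ≠ r → ∃ (y : V) (h : G'.Adj w y) (q : G'.Walk y r),
      P w = SimpleGraph.Walk.cons h q ∧ (P w).getVert 1 = y := by
    intro w hw
    obtain ⟨y, h, q, hq⟩ := SimpleGraph.Walk.exists_eq_cons_of_ne hw (P w)
    exact ⟨y, h, q, hq, by rw [hq]; simp⟩
  have hinj : Set.InjOn f ↑(Sᶜ) := by
    intro w₁ hw₁ w₂ hw₂ hf
    by_contra hne
    simp only [coe_compl, Set.mem_compl_iff, mem_coe] at hw₁ hw₂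
    have hw₁r : w₁ ≠ r := fun h => hw₁ (h ▸ hr)
    have hw₂r : w₂ ≠ r := fun h => hw₂ (h ▸ hr)
    obtain ⟨y₁, h₁, q₁, hq₁, hg₁⟩ := hdec w₁ hw₁r
    obtain ⟨y₂, h₂, q₂, hq₂, hg₂⟩ := hdec w₂ hw₂r
    rw [hfdef] at hf
    simp only [hg₁, hg₂] at hf
    rw [Sym2.eq_iff] at hf
    rcases hf with ⟨rfl, _⟩ | ⟨rfl, rfl⟩
    · exact hne rfl
    have hq₁path : q₁.IsPath := by
      have := hPpath w₁; rw [hq₁] at this; exact this.of_cons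
    have hq₂path : q₂.IsPath := by
      have := hPpath y₁; rw [hq₂] at this; exact this.of_cons
    have e₁ : q₁ = P y₁ := hPuniq _ _ hq₁path
    have e₂ : q₂ = P w₁ := hPuniq _ _ hq₂path
    have l₁ : (P w₁).length = (P y₁).length + 1 := by
      rw [hq₁, SimpleGraph.Walk.length_cons, e₁]
    have l₂ : (P y₁).length = (P w₁).length + 1 := by
      rw [hq₂, SimpleGraph.Walk.length_cons, e₂]
    omega
  have hmaps : ∀ w ∈ (Sᶜ : Finset V), f w ∈ T \ inducedEdges G S := by
    intro w hw
    rw [mem_compl] at hw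
    have hwr : w ≠ r := fun h => hw (h ▸ hr)
    obtain ⟨y, h, q, hq, hg⟩ := hdec w hwr
    rw [mem_sdiff]
    constructor
    · have : s(w, y) ∈ G'.edgeSet := h
      rw [hedge] at this
      simpa [hfdef, hg] using this
    · intro hmem
      rw [inducedEdges, mem_filter] at hmem
      exact hw (hmem.2 w (by simp [hfdef]))
  have hle : (Sᶜ : Finset V).card ≤ (T \ inducedEdges G S).card :=
    Finset.card_le_card_of_injOn f hmaps hinj
  have h1 : (T \ inducedEdges G S).card = T.card - (T ∩ inducedEdges G S).card := by
    rw [← Finset.sdiff_inter_self_left, Finset.card_sdiff_of_subset Finset.inter_subset_left]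
  have h2 : (Sᶜ : Finset V).card = Fintype.card V - S.card := Finset.card_compl S
  have h3 : S.card ≤ Fintype.card V := Finset.card_le_univ S
  have h4 : (T ∩ inducedEdges G S).card ≤ T.card := Finset.card_le_card Finset.inter_subset_left
  have h5 : 1 ≤ S.card := Finset.card_pos.mpr ⟨r, hr⟩
  omega

lemma stp_nonneg {x : Sym2 V → ℝ} (hx : x ∈ spanningTreePolytope G) (e : Sym2 V) :
    0 ≤ x e := by
  have hsub : spanningTreePolytope G ⊆ {y : Sym2 V → ℝ | 0 ≤ y e} := by
    apply convexHull_min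
    · rintro y ⟨T, -, rfl⟩
      simp only [Set.mem_setOf_eq, chi]
      split <;> norm_num
    · exact convex_halfSpace_ge (𝕜 := ℝ) (f := fun y : Sym2 V → ℝ => y e)
        ⟨fun a b => rfl, fun r a => rfl⟩ 0
  exact hsub hx

lemma stp_subtour {x : Sym2 V → ℝ} (hx : x ∈ spanningTreePolytope G)
    {S : Finset V} (hS : S.Nonempty) :
    ∑ e ∈ inducedEdges G S, x e ≤ (S.card : ℝ) - 1 := by
  have hsub : spanningTreePolytope G ⊆
      {y : Sym2 V → ℝ | ∑ e ∈ inducedEdges G S, y e ≤ (S.card : ℝ) - 1} := by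
    apply convexHull_min
    · rintro y ⟨T, hT, rfl⟩
      simp only [Set.mem_setOf_eq]
      have hsum : ∑ e ∈ inducedEdges G S, chi T e = ((inducedEdges G S ∩ T).card : ℝ) := by
        simp only [chi]
        rw [Finset.sum_boole, Finset.filter_mem_eq_inter]
      rw [hsum, Finset.inter_comm]
      have hc := tree_count G hT hS
      have : ((T ∩ inducedEdges G S).card : ℝ) + 1 ≤ (S.card : ℝ) := by exact_mod_cast hc
      linarith
    · exact convex_halfSpace_le ⟨fun a b => by simp [Finset.sum_add_distrib],
        fun r a => by simp [Finset.mul_sum]⟩ _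
  exact hsub hx

lemma sum_pair_le {x : Sym2 V → ℝ} (hpos : ∀ e, 0 ≤ x e)
    {A B C : Finset (Sym2 V)} (hA : A ⊆ C) (hB : B ⊆ C) (hAB : Disjoint A B) :
    ∑ e ∈ A, x e + ∑ e ∈ B, x e ≤ ∑ e ∈ C, x e := by
  rw [← Finset.sum_union hAB]
  exact Finset.sum_le_sum_of_subset_of_nonneg (Finset.union_subset hA hB)
    (fun e _ _ => hpos e)

end Helpers

theorem stmt5 (G : SimpleGraph V) (hG : G.Connected)
    (Vc : ℕ → Finset V) (k : ℕ)
    (hne : (Vc 0).Nonempty) (hchain : ∀ i < k, Vc i ⊂ Vc (i + 1))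
    (htop : Vc k ⊂ Finset.univ)
    (x : Sym2 V → ℝ) (hx : IsChainPoint G Vc k x)
    (U : Finset V) (hU : (∑ e ∈ inducedEdges G U, x e) = (U.card : ℝ) - 1) :
    ∀ i j m : ℕ, i < j → j < m → m ≤ k + 1 →
      (level Vc k i ∩ U).Nonempty → (level Vc k m ∩ U).Nonempty →
      (level Vc k j ∩ U).Nonempty := by
  classical
  intro i j m hij hjm hmk hi hm
  by_contra hj
  rw [Finset.not_nonempty_iff_eq_empty] at hj
  obtain ⟨hxP, hc0, hck, hclt, hdeg⟩ := hx
  have hj1 : 1 ≤ j := by omega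
  have hjk : j ≤ k := by omega
  have hk1 : 1 ≤ k := by omega
  -- chain monotonicity
  have hmono : ∀ a b, a ≤ b → b ≤ k → Vc a ⊆ Vc b := by
    intro a b hab hbk
    induction b with
    | zero => rw [Nat.le_zero.mp hab]
    | succ n ih =>
      rcases Nat.eq_or_lt_of_le hab with rfl | h
      · exact Finset.Subset.refl _
      · exact (ih (by omega) (by omega)).trans (hchain n (by omega)).subset
  set Lj : Finset V := Vc j \ Vc (j - 1) with hLjdef
  have hlevelj : level Vc k j = Lj := by
    rw [level]; rw [if_neg (by omega : ¬ j = 0), if_pos hjk]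
  have hLjne : Lj.Nonempty := by
    have hss := hchain (j - 1) (by omega)
    rw [(by omega : j - 1 + 1 = j)] at hss
    obtain ⟨v, hv1, hv2⟩ := Finset.exists_of_ssubset hss
    exact ⟨v, Finset.mem_sdiff.mpr ⟨hv1, hv2⟩⟩
  have hLjU : ∀ v ∈ U, v ∉ Lj := by
    intro v hvU hvL
    have : v ∈ level Vc k j ∩ U := by
      rw [hlevelj]; exact Finset.mem_inter.mpr ⟨hvL, hvU⟩
    rw [hj] at this
    exact absurd this (Finset.notMem_empty v)
  have hUj : ∀ v ∈ U, v ∉ Vc (j - 1) → v ∉ Vc j := by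
    intro v hvU hv1 hvj
    exact hLjU v hvU (Finset.mem_sdiff.mpr ⟨hvj, hv1⟩)
  set U₁ : Finset V := U ∩ Vc (j - 1) with hU₁def
  set U₂ : Finset V := U \ Vc (j - 1) with hU₂def
  have hU₁ne : U₁.Nonempty := by
    obtain ⟨v, hv⟩ := hi
    rw [Finset.mem_inter] at hv
    refine ⟨v, Finset.mem_inter.mpr ⟨hv.2, ?_⟩⟩
    by_cases hi0 : i = 0
    · subst hi0
      have hvL : v ∈ Vc 0 := by
        have := hv.1
        rwa [level, if_pos rfl] at this
      exact hmono 0 (j - 1) (by omega) (by omega) hvL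
    · have hlev : level Vc k i = Vc i \ Vc (i - 1) := by
        simp [level, hi0, (by omega : i ≤ k)]
      rw [hlev, Finset.mem_sdiff] at hv
      exact hmono i (j - 1) (by omega) (by omega) hv.1.1
  have hU₂ne : U₂.Nonempty := by
    obtain ⟨w, hw⟩ := hm
    rw [Finset.mem_inter] at hw
    refine ⟨w, Finset.mem_sdiff.mpr ⟨hw.2, ?_⟩⟩
    by_cases hmk' : m ≤ k
    · have hlev : level Vc k m = Vc m \ Vc (m - 1) := by
        rw [level, if_neg (by omega : ¬ m = 0), if_pos hmk']
      rw [hlev, Finset.mem_sdiff] at hw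
      intro hcon
      exact hw.1.2 (hmono (j - 1) (m - 1) (by omega) (by omega) hcon)
    · have hlev : level Vc k m = Finset.univ \ Vc k := by
        rw [level, if_neg (by omega : ¬ m = 0), if_neg hmk']
      rw [hlev, Finset.mem_sdiff] at hw
      intro hcon
      exact hw.1.2 (hmono (j - 1) k (by omega) (le_refl k) hcon)
  have hpos : ∀ e, 0 ≤ x e := stp_nonneg hxP
  have hUne : U.Nonempty := by
    obtain ⟨v, hv⟩ := hU₁ne
    exact ⟨v, (Finset.mem_inter.mp hv).1⟩
  -- the bridging edge set B
  set B : Finset (Sym2 V) :=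
    inducedEdges G U \ (inducedEdges G U₁ ∪ inducedEdges G U₂) with hBdef
  have hIdisj : Disjoint (inducedEdges G U₁) (inducedEdges G U₂) := by
    rw [Finset.disjoint_left]
    intro e he1 he2
    have hee := induced_subset he1
    obtain ⟨a, b, hab, rfl⟩ := exists_rep hee
    have h1 := (mem_induced_iff' hee).mp he1
    have h2 := (mem_induced_iff' hee).mp he2
    exact (Finset.mem_sdiff.mp h2.1).2 (Finset.mem_inter.mp h1.1).2
  have hIsub : inducedEdges G U₁ ∪ inducedEdges G U₂ ⊆ inducedEdges G U := by
    apply Finset.union_subset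
    · exact inducedEdges_mono Finset.inter_subset_left
    · exact inducedEdges_mono Finset.sdiff_subset
  have hsplitU : ∑ e ∈ inducedEdges G U, x e
      = ∑ e ∈ inducedEdges G U₁, x e + ∑ e ∈ inducedEdges G U₂, x e + ∑ e ∈ B, x e := by
    rw [hBdef]
    rw [← Finset.sum_union hIdisj]
    have := Finset.sum_sdiff (f := x) hIsub
    linarith
  have hcardU : U₁.card + U₂.card = U.card := Finset.card_inter_add_card_sdiff U (Vc (j - 1))
  have hsub1 : ∑ e ∈ inducedEdges G U₁, x e ≤ (U₁.card : ℝ) - 1 := stp_subtour hxP hU₁ne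
  have hsub2 : ∑ e ∈ inducedEdges G U₂, x e ≤ (U₂.card : ℝ) - 1 := stp_subtour hxP hU₂ne
  have hBge : (1 : ℝ) ≤ ∑ e ∈ B, x e := by
    have hcast : (U₁.card : ℝ) + (U₂.card : ℝ) = (U.card : ℝ) := by exact_mod_cast hcardU
    rw [hU] at hsplitU
    linarith
  -- structure of edges in B
  have hBrep : ∀ e ∈ B, ∃ a b, a ≠ b ∧ e = s(a, b) ∧ a ∈ U₁ ∧ b ∈ U₂ := by
    intro e he
    rw [hBdef, Finset.mem_sdiff, Finset.mem_union] at he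
    obtain ⟨heU, hnot⟩ := he
    push_neg at hnot
    obtain ⟨hn1, hn2⟩ := hnot
    have hee := induced_subset heU
    obtain ⟨a, b, hab, rfl⟩ := exists_rep hee
    obtain ⟨haU, hbU⟩ := (mem_induced_iff' hee).mp heU
    by_cases ha1 : a ∈ Vc (j - 1) <;> by_cases hb1 : b ∈ Vc (j - 1)
    · exact absurd ((mem_induced_iff' hee).mpr
        ⟨Finset.mem_inter.mpr ⟨haU, ha1⟩, Finset.mem_inter.mpr ⟨hbU, hb1⟩⟩) hn1
    · exact ⟨a, b, hab, rfl, Finset.mem_inter.mpr ⟨haU, ha1⟩,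
        Finset.mem_sdiff.mpr ⟨hbU, hb1⟩⟩
    · refine ⟨b, a, hab.symm, Sym2.eq_swap.symm, Finset.mem_inter.mpr ⟨hbU, hb1⟩,
        Finset.mem_sdiff.mpr ⟨haU, ha1⟩⟩
    · exact absurd ((mem_induced_iff' hee).mpr
        ⟨Finset.mem_sdiff.mpr ⟨haU, ha1⟩, Finset.mem_sdiff.mpr ⟨hbU, hb1⟩⟩) hn2
  have hBsub1 : B ⊆ cut G (Vc (j - 1)) := by
    intro e he
    obtain ⟨a, b, hab, rfl, ha, hb⟩ := hBrep e he
    have hee : s(a, b) ∈ G.edgeFinset :=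
      induced_subset ((Finset.mem_sdiff.mp he).1)
    exact (mem_cut_iff' hab hee).mpr
      (Or.inl ⟨(Finset.mem_inter.mp ha).2, (Finset.mem_sdiff.mp hb).2⟩)
  have hBsub2 : B ⊆ cut G (Vc j) := by
    intro e he
    obtain ⟨a, b, hab, rfl, ha, hb⟩ := hBrep e he
    have hee : s(a, b) ∈ G.edgeFinset :=
      induced_subset ((Finset.mem_sdiff.mp he).1)
    have haj : a ∈ Vc j := hmono (j - 1) j (by omega) hjk (Finset.mem_inter.mp ha).2
    have hbj : b ∉ Vc j :=
      hUj b (Finset.mem_sdiff.mp hb).1 (Finset.mem_sdiff.mp hb).2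
    exact (mem_cut_iff' hab hee).mpr (Or.inl ⟨haj, hbj⟩)
  have hBnotLj : ∀ e ∈ B, e ∉ cut G Lj := by
    intro e he
    obtain ⟨a, b, hab, rfl, ha, hb⟩ := hBrep e he
    apply not_mem_cut_out
    intro v hv
    rcases Sym2.mem_iff.mp hv with rfl | rfl
    · intro hcon
      exact (Finset.mem_sdiff.mp hcon).2 (Finset.mem_inter.mp ha).2
    · intro hcon
      exact hUj v (Finset.mem_sdiff.mp hb).1 (Finset.mem_sdiff.mp hb).2
        (Finset.mem_sdiff.mp hcon).1
  -- the two pieces of δ(Lj)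
  set D1 : Finset (Sym2 V) := cut G Lj ∩ cut G (Vc (j - 1)) with hD1def
  set D2 : Finset (Sym2 V) := cut G Lj ∩ cut G (Vc j) with hD2def
  have hLj_union : cut G Lj = D1 ∪ D2 := by
    ext e
    rw [Finset.mem_union, hD1def, hD2def, Finset.mem_inter, Finset.mem_inter]
    constructor
    · intro he
      obtain ⟨a, b, hab, heq, haL, hbL⟩ := mem_cut_elim he
      subst heq
      have hee : s(a, b) ∈ G.edgeFinset := cut_subset he
      have haj : a ∈ Vc j := (Finset.mem_sdiff.mp haL).1
      have haj1 : a ∉ Vc (j - 1) := (Finset.mem_sdiff.mp haL).2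
      by_cases hb1 : b ∈ Vc (j - 1)
      · exact Or.inl ⟨he, (mem_cut_iff' hab hee).mpr (Or.inr ⟨hb1, haj1⟩)⟩
      · have hbj : b ∉ Vc j := fun h => hbL (Finset.mem_sdiff.mpr ⟨h, hb1⟩)
        exact Or.inr ⟨he, (mem_cut_iff' hab hee).mpr (Or.inl ⟨haj, hbj⟩)⟩
    · rintro (⟨h, -⟩ | ⟨h, -⟩) <;> exact h
  have hD12 : Disjoint D1 D2 := by
    rw [Finset.disjoint_left]
    intro e hd1 hd2
    rw [hD1def, Finset.mem_inter] at hd1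
    rw [hD2def, Finset.mem_inter] at hd2
    obtain ⟨a, b, hab, heq, haL, hbL⟩ := mem_cut_elim hd1.1
    subst heq
    have hee : s(a, b) ∈ G.edgeFinset := cut_subset hd1.1
    have haj : a ∈ Vc j := (Finset.mem_sdiff.mp haL).1
    have haj1 : a ∉ Vc (j - 1) := (Finset.mem_sdiff.mp haL).2
    have hbj : b ∉ Vc j := by
      rcases (mem_cut_iff' hab hee).mp hd2.2 with ⟨-, h⟩ | ⟨-, h⟩
      · exact h
      · exact absurd haj h
    have hbj1 : b ∉ Vc (j - 1) := fun h => hbj (hmono (j - 1) j (by omega) hjk h)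
    rcases (mem_cut_iff' hab hee).mp hd1.2 with ⟨h, -⟩ | ⟨h, -⟩
    · exact haj1 h
    · exact hbj1 h
  have hsplitLj : ∑ e ∈ cut G Lj, x e = ∑ e ∈ D1, x e + ∑ e ∈ D2, x e := by
    rw [hLj_union, Finset.sum_union hD12]
  have hD1B : Disjoint D1 B := by
    rw [Finset.disjoint_left]
    intro e hd hb
    exact hBnotLj e hb (Finset.mem_inter.mp (hD1def ▸ hd)).1
  have hD2B : Disjoint D2 B := by
    rw [Finset.disjoint_left]
    intro e hd hb
    exact hBnotLj e hb (Finset.mem_inter.mp (hD2def ▸ hd)).1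
  have hineq1 : ∑ e ∈ D1, x e + ∑ e ∈ B, x e ≤ ∑ e ∈ cut G (Vc (j - 1)), x e :=
    sum_pair_le hpos Finset.inter_subset_right hBsub1 hD1B
  have hineq2 : ∑ e ∈ D2, x e + ∑ e ∈ B, x e ≤ ∑ e ∈ cut G (Vc j), x e :=
    sum_pair_le hpos Finset.inter_subset_right hBsub2 hD2B
  -- δ(Lj) ≥ 2
  have hdegj := hdeg j hj1 hjk
  rw [hlevelj] at hdegj
  have hdegeq := degree_sum_eq G x Lj
  have hsubLj : ∑ e ∈ inducedEdges G Lj, x e ≤ (Lj.card : ℝ) - 1 := stp_subtour hxP hLjne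
  have hdLj : (2 : ℝ) ≤ ∑ e ∈ cut G Lj, x e := by
    have hLc : (1 : ℝ) ≤ (Lj.card : ℝ) := by
      exact_mod_cast Finset.card_pos.mpr hLjne
    linarith [hdegeq, hdegj]
  -- cut bounds
  have hcutlt : ∀ t, t ≤ k → ∑ e ∈ cut G (Vc t), x e < 2 := by
    intro t ht
    by_cases ht0 : t = 0
    · subst ht0; rw [hc0]; norm_num
    · by_cases htk : t = k
      · subst htk; rw [hck]; norm_num
      · exact hclt t (by omega) (by omega)
  have hlt1 := hcutlt (j - 1) (by omega)
  have hlt2 := hcutlt j hjk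
  linarith
end

section
/- Let x be a chain-point for the chain V_0 ⊊ V_1 ⊊ … ⊊ V_k, let a, b ∈ ℕ with 0 ≤ a ≤ b ≤ k+1, and set S := L_a ∪ L_{a+1} ∪ … ∪ L_b. Then |S| − 2 < x(E(S)) ≤ |S| − 1. -/
open Finset
open scoped Classical

variable {V : Type*} [Fintype V]

/-!
Every linear inequality valid for all spanning trees holds on the spanning tree polytope, so
`x(E) = |V| - 1`, and `x(E(S)) ≤ |S| - 1` for nonempty `S` because the edges of a spanning tree
inside `S` form a forest on `S`.
The union of the levels `a, …, b` is `S = V_b \ V_{a-1}` (with `V_{-1} = ∅`, `V_{k+1} = V`).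
For `S = V` the lower bound is `x(E) = |V| - 1`. For a prefix `V_b` or a suffix `V \ V_{a-1}` it
follows from `x(E) = x(E(S)) + x(δ(S)) + x(E(V \ S))` with `x(E(V \ S)) ≤ |V \ S| - 1` and
`x(δ(S)) < 2`.
Otherwise every level in `S` has degree sum `2|L_i|`, so `2 x(E(S)) = 2|S| - x(δ(S))`, and
`δ(S) ⊆ δ(V_{a-1}) ∪ δ(V_b)` gives `x(δ(S)) < 4`.
-/

namespace SimpleGraph

lemma IsAcyclic.card_edgeFinset_add_one_le {W : Type*} [Fintype W] [Nonempty W]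
    {H : SimpleGraph W} [Fintype H.edgeSet] (hH : H.IsAcyclic) :
    #H.edgeFinset + 1 ≤ Fintype.card W := by
  obtain ⟨F, hHF, -, hF⟩ := connected_top.exists_isTree_le_of_le_of_isAcyclic le_top hH
  rw [← hF.card_edgeFinset]
  gcongr

lemma IsAcyclic.card_edgeFinset_add_one_le_of_support_subset {H : SimpleGraph V}
    (hH : H.IsAcyclic) {S : Finset V} (hS : S.Nonempty)
    (hsupp : H.support ⊆ S) : #H.edgeFinset + 1 ≤ #S := by
  have : Nonempty (S : Set V) := hS.coe_sort
  rw [← card_edgeFinset_induce_of_support_subset hsupp]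
  convert (hH.induce (S : Set V)).card_edgeFinset_add_one_le using 3 <;> simp

lemma edgeFinset_fromEdgeSet_of_subset {W : Type*} {G : SimpleGraph W} {F : Finset (Sym2 W)}
    [Fintype (fromEdgeSet (F : Set (Sym2 W))).edgeSet] (hF : (F : Set (Sym2 W)) ⊆ G.edgeSet) :
    (fromEdgeSet (F : Set (Sym2 W))).edgeFinset = F := by
  ext e
  simpa [edgeSet_fromEdgeSet] using fun he => G.not_isDiag_of_mem_edgeSet (hF he)

end SimpleGraph

open SimpleGraph

lemma IsSpanningTree.card_add_one {G : SimpleGraph V} {T : Finset (Sym2 V)}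
    (hT : IsSpanningTree G T) : #T + 1 = Fintype.card V := by
  simpa [edgeFinset_fromEdgeSet_of_subset hT.1] using hT.2.card_edgeFinset

lemma mk_mem_inducedEdges_iff {G : SimpleGraph V} {S : Finset V} {u v : V} :
    s(u, v) ∈ inducedEdges G S ↔ G.Adj u v ∧ u ∈ S ∧ v ∈ S := by
  simp [inducedEdges]

lemma mk_mem_cut_iff {G : SimpleGraph V} {S : Finset V} {u v : V} :
    s(u, v) ∈ cut G S ↔ G.Adj u v ∧ ¬(u ∈ S ↔ v ∈ S) := by
  simp only [cut, cutBetween, mem_filter, mem_edgeFinset, mem_edgeSet, Sym2.eq_iff, mem_compl]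
  grind

lemma IsSpanningTree.card_inter_inducedEdges_add_one_le {G : SimpleGraph V}
    {T : Finset (Sym2 V)} (hT : IsSpanningTree G T) {S : Finset V} (hS : S.Nonempty) :
    #(inducedEdges G S ∩ T) + 1 ≤ #S := by
  set F := inducedEdges G S ∩ T
  have hFG : (F : Set (Sym2 V)) ⊆ G.edgeSet := fun e he => hT.1 (mem_inter.1 he).2
  have hacyc : (fromEdgeSet (F : Set (Sym2 V))).IsAcyclic :=
    hT.2.isAcyclic.anti (fromEdgeSet_mono (by simp [F]))
  convert hacyc.card_edgeFinset_add_one_le_of_support_subset hS ?_ using 2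
  · convert congrArg card (edgeFinset_fromEdgeSet_of_subset hFG).symm
  · rintro u ⟨v, huv⟩
    simp only [F, fromEdgeSet_adj, coe_inter, Set.mem_inter_iff, mem_coe,
      mk_mem_inducedEdges_iff] at huv
    exact huv.1.1.2.1

lemma inducedEdges_subset_edgeFinset (G : SimpleGraph V) (S : Finset V) :
    inducedEdges G S ⊆ G.edgeFinset :=
  filter_subset _ _

lemma cut_subset_edgeFinset (G : SimpleGraph V) (S : Finset V) : cut G S ⊆ G.edgeFinset :=
  filter_subset _ _

lemma cut_compl (G : SimpleGraph V) (S : Finset V) : cut G Sᶜ = cut G S := by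
  ext e
  induction e using Sym2.ind
  simp only [mk_mem_cut_iff, mem_compl]
  tauto

lemma cut_sdiff_subset (G : SimpleGraph V) (A B : Finset V) :
    cut G (B \ A) ⊆ cut G A ∪ cut G B := by
  intro e
  induction e using Sym2.ind
  simp only [mem_union, mk_mem_cut_iff, mem_sdiff]
  tauto

lemma sum_edgeFinset_eq_inducedEdges_add_cut_add_inducedEdges_compl (G : SimpleGraph V)
    (S : Finset V) (x : Sym2 V → ℝ) :
    ∑ e ∈ G.edgeFinset, x e =
      ∑ e ∈ inducedEdges G S, x e + ∑ e ∈ cut G S, x e +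
        ∑ e ∈ inducedEdges G Sᶜ, x e := by
  calc ∑ e ∈ G.edgeFinset, x e
      = ∑ e ∈ G.edgeFinset, ((if e ∈ inducedEdges G S then x e else 0) +
          (if e ∈ cut G S then x e else 0) + (if e ∈ inducedEdges G Sᶜ then x e else 0)) := by
        refine sum_congr rfl fun e he => ?_
        induction e using Sym2.ind with | _ u v => ?_
        rw [mem_edgeFinset, mem_edgeSet] at he
        by_cases hu : u ∈ S <;> by_cases hv : v ∈ S <;>
          simp [mk_mem_inducedEdges_iff, mk_mem_cut_iff, he, hu, hv]
    _ = _ := by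
        simp only [sum_add_distrib, Finset.sum_ite_mem,
          inter_eq_right.2 (inducedEdges_subset_edgeFinset _ _),
          inter_eq_right.2 (cut_subset_edgeFinset _ _)]

lemma sum_sum_cut_singleton_eq (G : SimpleGraph V) (S : Finset V) (x : Sym2 V → ℝ) :
    ∑ v ∈ S, ∑ e ∈ cut G {v}, x e =
      2 * ∑ e ∈ inducedEdges G S, x e + ∑ e ∈ cut G S, x e := by
  calc ∑ v ∈ S, ∑ e ∈ cut G {v}, x e
      = ∑ e ∈ G.edgeFinset, ∑ v ∈ S, if e ∈ cut G {v} then x e else 0 := by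
        rw [sum_comm]
        simp only [Finset.sum_ite_mem, inter_eq_right.2 (cut_subset_edgeFinset _ _)]
    _ = ∑ e ∈ G.edgeFinset, (2 * (if e ∈ inducedEdges G S then x e else 0) +
          (if e ∈ cut G S then x e else 0)) := by
        refine sum_congr rfl fun e he => ?_
        induction e using Sym2.ind with | _ u w => ?_
        rw [mem_edgeFinset, mem_edgeSet] at he
        have hsplit : ∀ v, (if s(u, w) ∈ cut G {v} then x s(u, w) else 0) =
            (if u = v then x s(u, w) else 0) + (if w = v then x s(u, w) else 0) := by
          intro v
          have huw := he.ne
          by_cases hu : u = v <;> by_cases hw : w = v <;> simp_all [mk_mem_cut_iff]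
        rw [sum_congr rfl fun v _ => hsplit v, sum_add_distrib, sum_ite_eq, sum_ite_eq]
        by_cases hu : u ∈ S <;> by_cases hw : w ∈ S <;>
          simp [mk_mem_inducedEdges_iff, mk_mem_cut_iff, he, hu, hw, two_mul]
    _ = _ := by
        simp only [sum_add_distrib, ← mul_sum, Finset.sum_ite_mem,
          inter_eq_right.2 (inducedEdges_subset_edgeFinset _ _),
          inter_eq_right.2 (cut_subset_edgeFinset _ _)]

lemma isLinearMap_sum_apply {ι : Type*} (F : Finset ι) :
    IsLinearMap ℝ fun y : ι → ℝ => ∑ i ∈ F, y i :=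
  ⟨fun _ _ => sum_add_distrib, fun _ _ => (mul_sum _ _ _).symm⟩

section SpanningTreePolytope

variable {W : Type*} {G : SimpleGraph W} {x : Sym2 W → ℝ}

lemma sum_chi (T F : Finset (Sym2 W)) : ∑ e ∈ F, chi T e = #(F ∩ T) := by
  simp [chi]

lemma sum_le_of_mem_spanningTreePolytope (hx : x ∈ spanningTreePolytope G)
    {F : Finset (Sym2 W)} {c : ℝ} (h : ∀ T, IsSpanningTree G T → (#(F ∩ T) : ℝ) ≤ c) :
    ∑ e ∈ F, x e ≤ c :=
  convexHull_min (by rintro _ ⟨T, hT, rfl⟩; simpa [sum_chi] using h T hT)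
    (convex_halfSpace_le (isLinearMap_sum_apply F) c) hx

lemma le_sum_of_mem_spanningTreePolytope (hx : x ∈ spanningTreePolytope G)
    {F : Finset (Sym2 W)} {c : ℝ} (h : ∀ T, IsSpanningTree G T → c ≤ #(F ∩ T)) :
    c ≤ ∑ e ∈ F, x e :=
  convexHull_min (by rintro _ ⟨T, hT, rfl⟩; simpa [sum_chi] using h T hT)
    (convex_halfSpace_ge (isLinearMap_sum_apply F) c) hx

lemma nonneg_of_mem_spanningTreePolytope (hx : x ∈ spanningTreePolytope G) (e : Sym2 W) :
    0 ≤ x e := by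
  simpa using le_sum_of_mem_spanningTreePolytope hx (F := {e}) fun _ _ => by positivity

lemma sum_edgeFinset_of_mem_spanningTreePolytope [Fintype W] (hx : x ∈ spanningTreePolytope G) :
    ∑ e ∈ G.edgeFinset, x e = Fintype.card W - 1 := by
  have hcard (T) (hT : IsSpanningTree G T) :
      (#(G.edgeFinset ∩ T) : ℝ) = Fintype.card W - 1 := by
    rw [inter_eq_right.2 fun e he => mem_edgeFinset.2 (hT.1 he), ← hT.card_add_one]
    push_cast
    ring
  exact le_antisymm (sum_le_of_mem_spanningTreePolytope hx fun T hT => (hcard T hT).le)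
    (le_sum_of_mem_spanningTreePolytope hx fun T hT => (hcard T hT).ge)

lemma sum_inducedEdges_le_of_mem_spanningTreePolytope [Fintype W]
    (hx : x ∈ spanningTreePolytope G) {S : Finset W} (hS : S.Nonempty) :
    ∑ e ∈ inducedEdges G S, x e ≤ #S - 1 :=
  sum_le_of_mem_spanningTreePolytope hx fun _ hT => by
    have := hT.card_inter_inducedEdges_add_one_le hS
    rw [le_sub_iff_add_le]
    exact_mod_cast this

lemma card_sub_sum_cut_le_sum_inducedEdges [Fintype W] (hx : x ∈ spanningTreePolytope G)
    {S : Finset W} (hS : Sᶜ.Nonempty) :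
    #S - ∑ e ∈ cut G S, x e ≤ ∑ e ∈ inducedEdges G S, x e := by
  have hsplit := sum_edgeFinset_eq_inducedEdges_add_cut_add_inducedEdges_compl G S x
  have hcompl := sum_inducedEdges_le_of_mem_spanningTreePolytope hx hS
  rw [sum_edgeFinset_of_mem_spanningTreePolytope hx, card_compl, Nat.cast_sub (card_le_univ S)]
    at *
  linarith

lemma card_compl_sub_sum_cut_le_sum_inducedEdges_compl [Fintype W]
    (hx : x ∈ spanningTreePolytope G) {S : Finset W} (hS : S.Nonempty) :
    #Sᶜ - ∑ e ∈ cut G S, x e ≤ ∑ e ∈ inducedEdges G Sᶜ, x e := by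
  simpa [cut_compl] using card_sub_sum_cut_le_sum_inducedEdges hx (S := Sᶜ) (by simpa using hS)

lemma sum_cut_sdiff_le [Fintype W] (hx : x ∈ spanningTreePolytope G) (A B : Finset W) :
    ∑ e ∈ cut G (B \ A), x e ≤ ∑ e ∈ cut G A, x e + ∑ e ∈ cut G B, x e := by
  have hnonneg := nonneg_of_mem_spanningTreePolytope hx
  calc ∑ e ∈ cut G (B \ A), x e
      ≤ ∑ e ∈ cut G A ∪ cut G B, x e :=
        sum_le_sum_of_subset_of_nonneg (cut_sdiff_subset G A B) fun e _ _ => hnonneg e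
    _ ≤ ∑ e ∈ cut G A ∪ cut G B, x e + ∑ e ∈ cut G A ∩ cut G B, x e :=
        le_add_of_nonneg_right (sum_nonneg fun e _ => hnonneg e)
    _ = ∑ e ∈ cut G A, x e + ∑ e ∈ cut G B, x e := sum_union_inter

lemma sub_two_lt_sum_inducedEdges_sdiff [Fintype W] (hx : x ∈ spanningTreePolytope G)
    {A B : Finset W} (hdeg : ∑ v ∈ B \ A, ∑ e ∈ cut G {v}, x e = 2 * #(B \ A))
    (hA : ∑ e ∈ cut G A, x e < 2) (hB : ∑ e ∈ cut G B, x e < 2) :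
    #(B \ A) - 2 < ∑ e ∈ inducedEdges G (B \ A), x e := by
  rw [sum_sum_cut_singleton_eq] at hdeg
  linarith [sum_cut_sdiff_le hx A B]

end SpanningTreePolytope

lemma monotoneOn_nat_Iic_of_le_succ {α : Type*} [Preorder α] {f : ℕ → α} {k : ℕ}
    (hf : ∀ n < k, f n ≤ f (n + 1)) : MonotoneOn f (Set.Iic k) := by
  intro i _ j hj hij
  rw [Set.mem_Iic] at hj
  induction hij with
  | refl => exact le_rfl
  | step _ ih => exact (ih (by omega)).trans (hf _ (by omega))

lemma Finset.sum_biUnion_eq_mul_card {ι α : Type*} [DecidableEq α] {I : Finset ι}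
    {L : ι → Finset α} (hL : (I : Set ι).PairwiseDisjoint L) {f : α → ℝ} {c : ℝ}
    (hf : ∀ i ∈ I, ∑ v ∈ L i, f v = c * #(L i)) :
    ∑ v ∈ I.biUnion L, f v = c * #(I.biUnion L) := by
  rw [sum_biUnion hL, card_biUnion hL, Nat.cast_sum, mul_sum]
  exact sum_congr rfl hf

section Level

variable {Vc : ℕ → Finset V} {k : ℕ}

lemma mem_level_iff {i : ℕ} (hi : i ≤ k + 1) {v : V} :
    v ∈ level Vc k i ↔ (0 < i → v ∉ Vc (i - 1)) ∧ (i ≤ k → v ∈ Vc i) := by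
  unfold level
  split_ifs with h0 hk
  · simp [h0]
  · simp [Nat.pos_of_ne_zero h0, hk, and_comm]
  · obtain rfl : i = k + 1 := by omega
    simp

lemma mem_biUnion_level_iff (hmono : MonotoneOn Vc (Set.Iic k)) {a b : ℕ} (hab : a ≤ b)
    (hb : b ≤ k + 1) {v : V} :
    v ∈ (Icc a b).biUnion (level Vc k) ↔
      (0 < a → v ∉ Vc (a - 1)) ∧ (b ≤ k → v ∈ Vc b) := by
  simp only [mem_biUnion, mem_Icc]
  constructor
  · rintro ⟨i, ⟨hai, hib⟩, hv⟩
    rw [mem_level_iff (hib.trans hb)] at hv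
    refine ⟨fun ha hva => hv.1 (by omega) ?_, fun hbk => ?_⟩
    · exact hmono (Set.mem_Iic.2 (by omega)) (Set.mem_Iic.2 (by omega)) (by omega) hva
    · exact hmono (Set.mem_Iic.2 (by omega)) (Set.mem_Iic.2 hbk) hib (hv.2 (by omega))
  · rintro ⟨hva, hvb⟩
    -- `v` lies on the first level `i` with `v ∈ Vc i` (or on the top level if there is none)
    have hex : ∃ i, i ≤ k → v ∈ Vc i := ⟨k + 1, fun h => absurd h (by omega)⟩
    have hik : Nat.find hex ≤ k + 1 := Nat.find_min' hex fun h => absurd h (by omega)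
    refine ⟨Nat.find hex, ⟨?_, ?_⟩, ?_⟩
    · by_contra! h
      exact hva (by omega) (hmono (Set.mem_Iic.2 (by omega)) (Set.mem_Iic.2 (by omega))
        (by omega) (Nat.find_spec hex (by omega)))
    · by_contra! h
      exact Nat.find_min hex h hvb
    · refine (mem_level_iff hik).2 ⟨fun hi hv => ?_, Nat.find_spec hex⟩
      exact Nat.find_min hex (by omega : Nat.find hex - 1 < Nat.find hex) fun _ => hv

lemma pairwiseDisjoint_level (hmono : MonotoneOn Vc (Set.Iic k)) :
    (Set.Iic (k + 1)).PairwiseDisjoint (level Vc k) := by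
  intro i hi j hj hij
  rw [Set.mem_Iic] at hi hj
  rw [Function.onFun, Finset.disjoint_left]
  intro v hvi hvj
  rw [mem_level_iff hi] at hvi
  rw [mem_level_iff hj] at hvj
  rcases Nat.lt_or_gt_of_ne hij with h | h
  · exact hvj.1 (by omega) (hmono (Set.mem_Iic.2 (by omega)) (Set.mem_Iic.2 (by omega))
      (by omega) (hvi.2 (by omega)))
  · exact hvi.1 (by omega) (hmono (Set.mem_Iic.2 (by omega)) (Set.mem_Iic.2 (by omega))
      (by omega) (hvj.2 (by omega)))

lemma level_nonempty (hne : (Vc 0).Nonempty) (hchain : ∀ i < k, Vc i ⊂ Vc (i + 1))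
    (htop : Vc k ⊂ univ) (i : ℕ) : (level Vc k i).Nonempty := by
  unfold level
  split_ifs with h0 hik
  · exact hne
  · have hstep := hchain (i - 1) (by omega)
    rw [Nat.sub_add_cancel (Nat.pos_of_ne_zero h0)] at hstep
    exact sdiff_nonempty.2 hstep.2
  · exact sdiff_nonempty.2 htop.2

end Level

lemma inducedEdges_univ (G : SimpleGraph V) : inducedEdges G univ = G.edgeFinset :=
  filter_true_of_mem fun _ _ _ _ => mem_univ _

namespace IsChainPoint

variable {G : SimpleGraph V} {Vc : ℕ → Finset V} {k : ℕ} {x : Sym2 V → ℝ}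

lemma sum_cut_lt_two (hx : IsChainPoint G Vc k x) {i : ℕ} (hi : i ≤ k) :
    ∑ e ∈ cut G (Vc i), x e < 2 := by
  obtain ⟨-, hcut0, hcutk, hcutmid, -⟩ := hx
  rcases Nat.eq_zero_or_pos i with rfl | hi0
  · linarith
  rcases hi.lt_or_eq with hik | rfl
  · exact hcutmid i hi0 (by omega)
  · linarith

lemma sum_sum_cut_singleton_biUnion_level (hx : IsChainPoint G Vc k x)
    (hmono : MonotoneOn Vc (Set.Iic k)) {a b : ℕ} (ha : 0 < a) (hb : b ≤ k) :
    ∑ v ∈ (Icc a b).biUnion (level Vc k), ∑ e ∈ cut G {v}, x e =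
      2 * #((Icc a b).biUnion (level Vc k)) := by
  refine sum_biUnion_eq_mul_card ((pairwiseDisjoint_level hmono).subset ?_) fun i hi => ?_
  · intro i hi
    simp only [coe_Icc, Set.mem_Icc] at hi
    exact Set.mem_Iic.2 (by omega)
  · rw [mem_Icc] at hi
    exact hx.2.2.2.2 i (by omega) (by omega)

end IsChainPoint

theorem stmt7_general (G : SimpleGraph V)
    (Vc : ℕ → Finset V) (k : ℕ)
    (hne : (Vc 0).Nonempty) (hchain : ∀ i < k, Vc i ⊂ Vc (i + 1))
    (htop : Vc k ⊂ Finset.univ)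
    (x : Sym2 V → ℝ) (hx : IsChainPoint G Vc k x)
    (a b : ℕ) (hab : a ≤ b) (hb : b ≤ k + 1)
    (S : Finset V) (hS : S = (Finset.Icc a b).biUnion (level Vc k)) :
    (S.card : ℝ) - 2 < ∑ e ∈ inducedEdges G S, x e ∧
    (∑ e ∈ inducedEdges G S, x e) ≤ (S.card : ℝ) - 1 := by
  have hsp := hx.1
  have hmono : MonotoneOn Vc (Set.Iic k) :=
    monotoneOn_nat_Iic_of_le_succ fun i hi => (hchain i hi).subset
  have hSne : S.Nonempty := (level_nonempty hne hchain htop a).mono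
    (hS ▸ subset_biUnion_of_mem _ (mem_Icc.2 ⟨le_rfl, hab⟩))
  refine ⟨?_, sum_inducedEdges_le_of_mem_spanningTreePolytope hsp hSne⟩
  have hmem (v : V) : v ∈ S ↔ (0 < a → v ∉ Vc (a - 1)) ∧ (b ≤ k → v ∈ Vc b) :=
    hS ▸ mem_biUnion_level_iff hmono hab hb
  rcases Nat.eq_zero_or_pos a with rfl | ha <;> rcases (Nat.le_succ_iff.1 hb) with hbk | rfl
  · obtain rfl : S = Vc b := by ext v; simp [hmem, hbk]
    obtain ⟨v, -, hv⟩ := exists_of_ssubset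
      ((hmono (Set.mem_Iic.2 hbk) (Set.mem_Iic.2 le_rfl) hbk).trans_ssubset htop)
    linarith [card_sub_sum_cut_le_sum_inducedEdges hsp ⟨v, mem_compl.2 hv⟩,
      hx.sum_cut_lt_two (i := b) (by omega)]
  · obtain rfl : S = univ := by ext v; simp [hmem]
    rw [inducedEdges_univ, sum_edgeFinset_of_mem_spanningTreePolytope hsp, card_univ]
    linarith
  · have hdeg := hx.sum_sum_cut_singleton_biUnion_level hmono ha (hbk)
    rw [← hS] at hdeg
    obtain rfl : S = Vc b \ Vc (a - 1) := by
      ext v; simp [hmem, ha, hbk, and_comm]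
    exact sub_two_lt_sum_inducedEdges_sdiff hsp hdeg (hx.sum_cut_lt_two (by omega))
      (hx.sum_cut_lt_two (by omega))
  · obtain rfl : S = (Vc (a - 1))ᶜ := by ext v; simp [hmem, ha]
    have hA : (Vc (a - 1)).Nonempty :=
      hne.mono (hmono (Set.mem_Iic.2 (Nat.zero_le _)) (Set.mem_Iic.2 (by omega)) (Nat.zero_le _))
    linarith [card_compl_sub_sum_cut_le_sum_inducedEdges_compl hsp hA,
      hx.sum_cut_lt_two (i := a - 1) (by omega)]

theorem stmt7 (G : SimpleGraph V) (hG : G.Connected)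
    (Vc : ℕ → Finset V) (k : ℕ)
    (hne : (Vc 0).Nonempty) (hchain : ∀ i < k, Vc i ⊂ Vc (i + 1))
    (htop : Vc k ⊂ Finset.univ)
    (x : Sym2 V → ℝ) (hx : IsChainPoint G Vc k x)
    (a b : ℕ) (hab : a ≤ b) (hb : b ≤ k + 1)
    (S : Finset V) (hS : S = (Finset.Icc a b).biUnion (level Vc k)) :
    (S.card : ℝ) - 2 < ∑ e ∈ inducedEdges G S, x e ∧
    (∑ e ∈ inducedEdges G S, x e) ≤ (S.card : ℝ) - 1 :=
  stmt7_general G Vc k hne hchain htop x hx a b hab hb S hS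
end
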